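/- There exist C > 0 and s₀ ≥ 1 such that for all s ≥ s₀ and all y ∈ ℝ: |R(y,s)| ≤ C/√s, where R(y,s) = −∂_s φ(y,s) + ∂_y² φ(y,s) − (y/2)·∂_y φ(y,s) − ((1+iδ)/(p−1))·φ(y,s) + (1+iδ)·|φ(y,s)|^{p−1}·φ(y,s). -/

import Mathlib

open Complex

/-- `x^w := exp(w · log x)` for a positive real base `x` and complex exponent `w`. -/
noncomputable def rcpow (x : ℝ) (w : ℂ) : ℂ := Complex.exp (w * Real.log x)

/-- The approximate profile
`φ(y,s) = κ^{−iδ}·(p−1 + b y²/√s)^{−(1+iδ)/(p−1)} + (1+iδ)·a/√s`. -/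
noncomputable def phiA (p δ κ b a : ℝ) (y s : ℝ) : ℂ :=
  rcpow κ (-(Complex.I * δ)) *
    rcpow (p - 1 + b * y ^ 2 / Real.sqrt s) (-(1 + Complex.I * δ) / (p - 1)) +
  (1 + Complex.I * δ) * ((a / Real.sqrt s : ℝ) : ℂ)

/-- The error term
`R(y,s) = −∂_s φ + ∂_y²φ − (y/2)∂_y φ − ((1+iδ)/(p−1))φ + (1+iδ)|φ|^{p−1}φ`. -/
noncomputable def Rt (p δ κ b a : ℝ) (y s : ℝ) : ℂ :=
  - deriv (fun σ => phiA p δ κ b a y σ) s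
  + deriv (deriv (fun z => phiA p δ κ b a z s)) y
  - ((y / 2 : ℝ) : ℂ) * deriv (fun z => phiA p δ κ b a z s) y
  - ((1 + Complex.I * δ) / (p - 1)) * phiA p δ κ b a y s
  + (1 + Complex.I * δ) * ((‖phiA p δ κ b a y s‖ ^ (p - 1) : ℝ) : ℂ) *
      phiA p δ κ b a y s

/-! Write `φ = Φ + (1+iδ)a/√s` with `Φ = κ^{-iδ} X^{-(1+iδ)/(p-1)}` and `X = p - 1 + b y²/√s`.
Since `|Φ|^{p-1} = 1/X` and `(y/2) ∂_y X = X - (p-1)`, the transport term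
`-(y/2) ∂_y Φ = ((1+iδ)/(p-1)) Φ - (1+iδ) Φ / X` cancels exactly against the zeroth-order terms
`-((1+iδ)/(p-1)) Φ + (1+iδ) |Φ|^{p-1} Φ`. Everything that is left carries a factor `1/√s`:
the `s`-derivative, the second `y`-derivative (controlled by `X ≥ p - 1` and `b y²/√s ≤ X`),
the correction `a/√s`, and `|φ|^{p-1}φ - |Φ|^{p-1}Φ`, because `u ↦ |u|^q u` is Lipschitz on
bounded sets with constant `(q+1) M^q`. -/

lemma norm_rcpow (x : ℝ) (w : ℂ) : ‖rcpow x w‖ = Real.exp (w.re * Real.log x) := by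
  simp [rcpow, Complex.norm_exp]

lemma HasDerivAt.rcpow {f : ℝ → ℝ} {f' x : ℝ} (hf : HasDerivAt f f' x) (hx : 0 < f x) (w : ℂ) :
    HasDerivAt (fun t => rcpow (f t) w) (rcpow (f x) w * (w * ↑(f' / f x))) x := by
  simpa [_root_.rcpow] using ((hf.log hx.ne').ofReal_comp.const_mul w).cexp

lemma mul_rpow_sub_rpow_le {x y q : ℝ} (hx : 0 ≤ x) (hxy : x ≤ y) (hq : 0 ≤ q) :
    x * (y ^ q - x ^ q) ≤ q * y ^ q * (y - x) := by
  obtain rfl | hy := (hx.trans hxy).eq_or_lt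
  · simp [le_antisymm hxy hx]
  have bernoulli := one_add_mul_self_le_rpow_one_add (s := x / y - 1)
    (by linarith [div_nonneg hx hy.le]) (p := q + 1) (by linarith)
  rw [add_sub_cancel, Real.div_rpow hx hy.le, Real.rpow_add_one' hx (by linarith),
    Real.rpow_add_one hy.ne', le_div_iff₀ (by positivity)] at bernoulli
  have hyq : 0 < y ^ q := by positivity
  field_simp at bernoulli
  nlinarith

lemma norm_rpow_smul_sub_rpow_smul_le {E : Type*} [NormedAddCommGroup E] [NormedSpace ℝ E]
    {u v : E} {M q : ℝ} (hu : ‖u‖ ≤ M) (hv : ‖v‖ ≤ M) (hq : 0 ≤ q) :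
    ‖‖u‖ ^ q • u - ‖v‖ ^ q • v‖ ≤ (q + 1) * M ^ q * ‖u - v‖ := by
  wlog huv : ‖v‖ ≤ ‖u‖ generalizing u v
  · rw [← norm_neg, neg_sub, norm_sub_rev u v]
    exact this hv hu (le_of_not_ge huv)
  have split : ‖u‖ ^ q • u - ‖v‖ ^ q • v = ‖u‖ ^ q • (u - v) + (‖u‖ ^ q - ‖v‖ ^ q) • v := by
    rw [smul_sub, sub_smul]; abel
  have hMq : ‖u‖ ^ q ≤ M ^ q := Real.rpow_le_rpow (norm_nonneg _) hu hq
  have hpow : 0 ≤ ‖u‖ ^ q - ‖v‖ ^ q := sub_nonneg.2 (Real.rpow_le_rpow (norm_nonneg _) huv hq)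
  calc ‖‖u‖ ^ q • u - ‖v‖ ^ q • v‖
      ≤ ‖u‖ ^ q * ‖u - v‖ + ‖v‖ * (‖u‖ ^ q - ‖v‖ ^ q) := by
        rw [split]
        refine (norm_add_le _ _).trans_eq ?_
        rw [norm_smul, norm_smul, Real.norm_of_nonneg (by positivity),
          Real.norm_of_nonneg hpow, mul_comm ‖v‖]
    _ ≤ M ^ q * ‖u - v‖ + q * M ^ q * ‖u - v‖ := by
        refine add_le_add (by gcongr) ?_
        calc ‖v‖ * (‖u‖ ^ q - ‖v‖ ^ q) ≤ q * ‖u‖ ^ q * (‖u‖ - ‖v‖) :=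
              mul_rpow_sub_rpow_le (norm_nonneg _) huv hq
          _ ≤ q * M ^ q * ‖u - v‖ := by
              have hM : 0 ≤ M := (norm_nonneg _).trans hu
              have hqM : 0 ≤ q * M ^ q := mul_nonneg hq (Real.rpow_nonneg hM q)
              gcongr
              exact norm_sub_norm_le u v
    _ = (q + 1) * M ^ q * ‖u - v‖ := by ring

lemma hasDerivAt_div_sqrt (c : ℝ) {s : ℝ} (hs : 0 < s) :
    HasDerivAt (fun σ => c / √σ) (-(c / √s) / (2 * s)) s := by
  have hsqrt : √s ≠ 0 := (Real.sqrt_pos.2 hs).ne'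
  refine ((hasDerivAt_const s c).div (Real.hasDerivAt_sqrt hs.ne') hsqrt).congr_deriv ?_
  rw [Real.sq_sqrt hs.le]
  field_simp
  ring

noncomputable def profilePhase (κ δ : ℝ) : ℂ := rcpow κ (-(I * δ))

noncomputable def profileExponent (p δ : ℝ) : ℂ := -(1 + I * δ) / (p - 1)

noncomputable def profileBase (p b y s : ℝ) : ℝ := p - 1 + b * y ^ 2 / √s

noncomputable def profileCore (p δ κ b y s : ℝ) : ℂ :=
  profilePhase κ δ * rcpow (profileBase p b y s) (profileExponent p δ)

section Profile

variable {p δ κ b a y s : ℝ}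

lemma phiA_eq : phiA p δ κ b a y s = profileCore p δ κ b y s + (1 + I * δ) * ((a / √s : ℝ) : ℂ) :=
  rfl

lemma profileExponent_re : (profileExponent p δ).re = -1 / (p - 1) := by
  rw [profileExponent, show ((p : ℂ) - 1) = ((p - 1 : ℝ) : ℂ) by push_cast; ring,
    Complex.div_ofReal_re]
  simp [neg_div]

lemma profileBase_pos (hp : 1 < p) (hb : 0 ≤ b) : 0 < profileBase p b y s := by
  unfold profileBase; positivity

lemma sub_one_le_profileBase (hb : 0 ≤ b) : p - 1 ≤ profileBase p b y s := by
  unfold profileBase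
  have : 0 ≤ b * y ^ 2 / √s := by positivity
  linarith

lemma norm_profileCore (hp : 1 < p) (hb : 0 ≤ b) :
    ‖profileCore p δ κ b y s‖ = profileBase p b y s ^ (-1 / (p - 1)) := by
  rw [profileCore, norm_mul, profilePhase, norm_rcpow, norm_rcpow, profileExponent_re,
    Real.rpow_def_of_pos (profileBase_pos hp hb), mul_comm (Real.log _)]
  simp

lemma norm_profileCore_le (hp : 1 < p) (hb : 0 ≤ b) :
    ‖profileCore p δ κ b y s‖ ≤ (p - 1) ^ (-1 / (p - 1)) := by
  rw [norm_profileCore hp hb]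
  exact Real.rpow_le_rpow_of_nonpos (by linarith) (sub_one_le_profileBase hb)
    (div_nonpos_of_nonpos_of_nonneg (by norm_num) (by linarith))

lemma norm_profileCore_rpow (hp : 1 < p) (hb : 0 ≤ b) :
    ‖profileCore p δ κ b y s‖ ^ (p - 1) = (profileBase p b y s)⁻¹ := by
  rw [norm_profileCore hp hb, ← Real.rpow_mul (profileBase_pos hp hb).le,
    div_mul_cancel₀ _ (by linarith), Real.rpow_neg_one]

lemma hasDerivAt_profileBase_s (hs : 0 < s) :
    HasDerivAt (fun σ => profileBase p b y σ) (-(b * y ^ 2 / √s) / (2 * s)) s :=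
  (hasDerivAt_div_sqrt _ hs).const_add _

lemma hasDerivAt_profileBase_y (z : ℝ) :
    HasDerivAt (fun z => profileBase p b z s) (2 * b * z / √s) z := by
  refine ((((hasDerivAt_pow 2 z).const_mul b).div_const √s).const_add (p - 1)).congr_deriv ?_
  push_cast; ring

lemma hasDerivAt_profileCore_s (hp : 1 < p) (hb : 0 ≤ b) (hs : 0 < s) :
    HasDerivAt (fun σ => profileCore p δ κ b y σ) (profileExponent p δ * profileCore p δ κ b y s *
      ((-(b * y ^ 2 / √s) / (2 * s) / profileBase p b y s : ℝ) : ℂ)) s := by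
  refine (((hasDerivAt_profileBase_s hs).rcpow (profileBase_pos hp hb)
    (profileExponent p δ)).const_mul (profilePhase κ δ)).congr_deriv ?_
  rw [profileCore]
  ring

lemma hasDerivAt_profileCore_y (hp : 1 < p) (hb : 0 ≤ b) (z : ℝ) :
    HasDerivAt (fun z => profileCore p δ κ b z s) (profileExponent p δ * profileCore p δ κ b z s *
      ((2 * b * z / √s / profileBase p b z s : ℝ) : ℂ)) z := by
  refine (((hasDerivAt_profileBase_y z).rcpow (profileBase_pos hp hb)
    (profileExponent p δ)).const_mul (profilePhase κ δ)).congr_deriv ?_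
  rw [profileCore]
  ring

lemma hasDerivAt_phiA_s (hp : 1 < p) (hb : 0 ≤ b) (hs : 0 < s) :
    HasDerivAt (fun σ => phiA p δ κ b a y σ)
      (profileExponent p δ * profileCore p δ κ b y s *
          ((-(b * y ^ 2 / √s) / (2 * s) / profileBase p b y s : ℝ) : ℂ) +
        (1 + I * δ) * ((-(a / √s) / (2 * s) : ℝ) : ℂ)) s :=
  (hasDerivAt_profileCore_s hp hb hs).add ((hasDerivAt_div_sqrt a hs).ofReal_comp.const_mul _)

lemma deriv_phiA_y (hp : 1 < p) (hb : 0 ≤ b) :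
    deriv (fun z => phiA p δ κ b a z s) = fun z =>
      profileExponent p δ * profileCore p δ κ b z s *
        ((2 * b * z / √s / profileBase p b z s : ℝ) : ℂ) :=
  funext fun z => ((hasDerivAt_profileCore_y hp hb z).add_const _).deriv

lemma deriv_deriv_phiA_y (hp : 1 < p) (hb : 0 ≤ b) :
    deriv (deriv (fun z => phiA p δ κ b a z s)) y =
      profileExponent p δ * profileCore p δ κ b y s *
        (profileExponent p δ * (((2 * b * y / √s / profileBase p b y s) ^ 2 : ℝ) : ℂ) +
          ((2 * b / √s * (p - 1 - b * y ^ 2 / √s) / profileBase p b y s ^ 2 : ℝ) : ℂ)) := by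
  have hX := profileBase_pos (y := y) (s := s) hp hb
  have hw : HasDerivAt (fun z => 2 * b * z / √s / profileBase p b z s)
      (2 * b / √s * (p - 1 - b * y ^ 2 / √s) / profileBase p b y s ^ 2) y := by
    refine ((((hasDerivAt_id y).const_mul (2 * b)).div_const √s).div
      (hasDerivAt_profileBase_y y) hX.ne').congr_deriv ?_
    have hXdef : profileBase p b y s = p - 1 + b * y ^ 2 / √s := rfl
    simp only [id]
    linear_combination (2 * b / √s / profileBase p b y s ^ 2) * hXdef
  rw [deriv_phiA_y hp hb]
  refine ((((hasDerivAt_profileCore_y hp hb y).const_mul _).mul hw.ofReal_comp)).deriv.trans ?_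
  push_cast
  ring

lemma Rt_eq (hp : 1 < p) (hb : 0 ≤ b) (hs : 0 < s) :
    Rt p δ κ b a y s =
      profileExponent p δ * profileCore p δ κ b y s *
          ((b * y ^ 2 / √s / (2 * s) / profileBase p b y s : ℝ) : ℂ) +
        (1 + I * δ) * ((a / √s / (2 * s) : ℝ) : ℂ) +
        profileExponent p δ * profileCore p δ κ b y s *
          (profileExponent p δ * (((2 * b * y / √s / profileBase p b y s) ^ 2 : ℝ) : ℂ) +
            ((2 * b / √s * (p - 1 - b * y ^ 2 / √s) / profileBase p b y s ^ 2 : ℝ) : ℂ)) +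
        profileExponent p δ * (1 + I * δ) * ((a / √s : ℝ) : ℂ) +
        (1 + I * δ) * (‖phiA p δ κ b a y s‖ ^ (p - 1) • phiA p δ κ b a y s -
          ‖profileCore p δ κ b y s‖ ^ (p - 1) • profileCore p δ κ b y s) := by
  have hX := profileBase_pos (y := y) (s := s) hp hb
  have hXdef : profileBase p b y s = p - 1 + b * y ^ 2 / √s := rfl
  rw [Rt, (hasDerivAt_phiA_s hp hb hs).deriv, deriv_deriv_phiA_y hp hb, deriv_phiA_y hp hb,
    norm_profileCore_rpow hp hb, Complex.real_smul, Complex.real_smul, phiA_eq]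
  have hp1 : (p : ℂ) - 1 ≠ 0 := by exact_mod_cast (sub_pos.2 hp).ne'
  have hXC : ((profileBase p b y s : ℝ) : ℂ) ≠ 0 := by exact_mod_cast hX.ne'
  have hsC : ((√s : ℝ) : ℂ) ≠ 0 := by exact_mod_cast (Real.sqrt_pos.2 hs).ne'
  have hXdefC : ((√s : ℝ) : ℂ) * ((profileBase p b y s : ℝ) : ℂ) =
      (p - 1) * ((√s : ℝ) : ℂ) + b * y ^ 2 := by
    rw [hXdef]; push_cast; field_simp
  simp only [profileExponent]
  push_cast
  field_simp
  -- the transport term cancels the zeroth-order terms because `√s X = (p-1)√s + b y²`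
  linear_combination (-(1 + I * δ) * 2 * (p - 1) * ((√s : ℝ) : ℂ) *
    ((profileBase p b y s : ℝ) : ℂ) * profileCore p δ κ b y s) * hXdefC

end Profile

section Bounds

variable {p δ κ b a y s : ℝ}

lemma div_profileBase_le_one (hp : 1 < p) (hb : 0 ≤ b) :
    b * y ^ 2 / √s / profileBase p b y s ≤ 1 :=
  div_le_one_of_le₀ (by unfold profileBase; linarith) (profileBase_pos hp hb).le

lemma time_logDeriv_profileBase_le (hp : 1 < p) (hb : 0 ≤ b) (hs : 1 ≤ s) :
    b * y ^ 2 / √s / (2 * s) / profileBase p b y s ≤ 1 / √s :=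
  calc b * y ^ 2 / √s / (2 * s) / profileBase p b y s
      = b * y ^ 2 / √s / profileBase p b y s / (2 * s) := by ring
    _ ≤ 1 / (2 * s) := by gcongr; exact div_profileBase_le_one hp hb
    _ ≤ 1 / √s := one_div_le_one_div_of_le (Real.sqrt_pos.2 (by linarith))
      (by linarith [Real.sqrt_le_self_iff.2 (Or.inr hs)])

lemma sq_logDeriv_profileBase_le (hp : 1 < p) (hb : 0 ≤ b) (hs : 0 < s) :
    (2 * b * y / √s / profileBase p b y s) ^ 2 ≤ 4 * b / ((p - 1) * √s) := by
  have hX := profileBase_pos (y := y) (s := s) hp hb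
  have hr : 0 < √s := Real.sqrt_pos.2 hs
  calc (2 * b * y / √s / profileBase p b y s) ^ 2
      = 4 * b / √s * (b * y ^ 2 / √s / profileBase p b y s) / profileBase p b y s := by
        field_simp
        ring
    _ ≤ 4 * b / √s * 1 / (p - 1) := by
        have h1 := div_profileBase_le_one (y := y) (s := s) hp hb
        have h2 := sub_one_le_profileBase (p := p) (y := y) (s := s) hb
        have h3 : 0 < p - 1 := by linarith
        gcongr
    _ = 4 * b / ((p - 1) * √s) := by field_simp

lemma abs_deriv_logDeriv_profileBase_le (hp : 1 < p) (hb : 0 ≤ b) (hs : 0 < s) :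
    |2 * b / √s * (p - 1 - b * y ^ 2 / √s) / profileBase p b y s ^ 2| ≤
      2 * b / ((p - 1) * √s) := by
  have hX := profileBase_pos (y := y) (s := s) hp hb
  have hr : 0 < √s := Real.sqrt_pos.2 hs
  have hu : 0 ≤ b * y ^ 2 / √s := by positivity
  have hnum : |p - 1 - b * y ^ 2 / √s| ≤ profileBase p b y s := by
    unfold profileBase; rw [abs_le]; constructor <;> linarith
  rw [abs_div, abs_mul, abs_of_nonneg (by positivity : 0 ≤ 2 * b / √s), abs_of_pos (pow_pos hX 2)]
  calc 2 * b / √s * |p - 1 - b * y ^ 2 / √s| / profileBase p b y s ^ 2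
      ≤ 2 * b / √s * profileBase p b y s / profileBase p b y s ^ 2 := by gcongr
    _ = 2 * b / √s / profileBase p b y s := by field_simp
    _ ≤ 2 * b / √s / (p - 1) := by
        have h2 := sub_one_le_profileBase (p := p) (y := y) (s := s) hb
        have h3 : 0 < p - 1 := by linarith
        gcongr
    _ = 2 * b / ((p - 1) * √s) := by field_simp

lemma norm_phiA_sub_profileCore (hs : 0 < s) :
    ‖phiA p δ κ b a y s - profileCore p δ κ b y s‖ = ‖1 + I * δ‖ * |a| / √s := by
  rw [phiA_eq, add_sub_cancel_left, norm_mul, Complex.norm_real, Real.norm_eq_abs, abs_div,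
    abs_of_pos (Real.sqrt_pos.2 hs), mul_div_assoc]

lemma norm_nonlinearity_sub_le (hp : 1 < p) (hb : 0 ≤ b) (hs : 1 ≤ s) :
    ‖‖phiA p δ κ b a y s‖ ^ (p - 1) • phiA p δ κ b a y s -
        ‖profileCore p δ κ b y s‖ ^ (p - 1) • profileCore p δ κ b y s‖ ≤
      p * ((p - 1) ^ (-1 / (p - 1)) + ‖1 + I * δ‖ * |a|) ^ (p - 1) *
        (‖1 + I * δ‖ * |a| / √s) := by
  have hcore := norm_profileCore_le (δ := δ) (κ := κ) (y := y) (s := s) hp hb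
  have hdiff := norm_phiA_sub_profileCore (p := p) (δ := δ) (κ := κ) (b := b) (a := a) (y := y)
    (by linarith : 0 < s)
  have hcorr : ‖1 + I * δ‖ * |a| / √s ≤ ‖1 + I * δ‖ * |a| :=
    div_le_self (by positivity) (Real.one_le_sqrt.2 hs)
  have hphi : ‖phiA p δ κ b a y s‖ ≤ (p - 1) ^ (-1 / (p - 1)) + ‖1 + I * δ‖ * |a| := by
    calc ‖phiA p δ κ b a y s‖
        ≤ ‖profileCore p δ κ b y s‖ + ‖phiA p δ κ b a y s - profileCore p δ κ b y s‖ :=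
          norm_le_norm_add_norm_sub' _ _
      _ ≤ _ := by rw [hdiff]; gcongr
  have := norm_rpow_smul_sub_rpow_smul_le hphi
    (hcore.trans (le_add_of_nonneg_right (by positivity))) (by linarith : 0 ≤ p - 1)
  rwa [sub_add_cancel, hdiff] at this

end Bounds

theorem exists_norm_Rt_le (p δ κ b a : ℝ) (hp : 1 < p) (hb : 0 ≤ b) :
    ∃ C, ∀ s, 1 ≤ s → ∀ y, ‖Rt p δ κ b a y s‖ ≤ C / √s := by
  set n := ‖profileExponent p δ‖
  set m := ‖1 + I * δ‖
  set Mf := (p - 1) ^ (-1 / (p - 1))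
  set M := Mf + m * |a|
  refine ⟨n * Mf + m * |a| + n * Mf * (n * (4 * b) + 2 * b) / (p - 1) + n * m * |a| +
    m * (p * M ^ (p - 1) * (m * |a|)), fun s hs y => ?_⟩
  have hs0 : 0 < s := by linarith
  have hr : 0 < √s := Real.sqrt_pos.2 hs0
  have hX := profileBase_pos (y := y) (s := s) hp hb
  have hcore := norm_profileCore_le (δ := δ) (κ := κ) (y := y) (s := s) hp hb
  rw [Rt_eq hp hb hs0]
  calc _ ≤ n * Mf * (1 / √s) + m * (|a| / √s) + n * Mf * ((n * (4 * b) + 2 * b) / ((p - 1) * √s))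
        + n * m * (|a| / √s) + m * (p * M ^ (p - 1) * (m * |a| / √s)) := by
        refine norm_add_le_of_le (norm_add_le_of_le (norm_add_le_of_le
          (norm_add_le_of_le ?_ ?_) ?_) ?_) ?_
        · rw [norm_mul, norm_mul, Complex.norm_real,
            Real.norm_of_nonneg (div_nonneg (by positivity) hX.le)]
          exact mul_le_mul (by gcongr) (time_logDeriv_profileBase_le hp hb hs)
            (div_nonneg (by positivity) hX.le) (by positivity)
        · rw [norm_mul, Complex.norm_real, Real.norm_eq_abs, abs_div, abs_div, abs_of_pos hr,
            abs_of_pos (by positivity : 0 < 2 * s)]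
          exact mul_le_mul_of_nonneg_left (div_le_self (by positivity) (by linarith))
            (norm_nonneg _)
        · rw [norm_mul, norm_mul, add_div]
          gcongr
          refine norm_add_le_of_le ?_ ?_
          · rw [norm_mul, Complex.norm_real, Real.norm_of_nonneg (sq_nonneg _), mul_div_assoc n]
            exact mul_le_mul_of_nonneg_left (sq_logDeriv_profileBase_le hp hb hs0) (norm_nonneg _)
          · rw [Complex.norm_real, Real.norm_eq_abs]
            exact abs_deriv_logDeriv_profileBase_le hp hb hs0
        · rw [norm_mul, norm_mul, Complex.norm_real, Real.norm_eq_abs, abs_div, abs_of_pos hr]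
        · rw [norm_mul]
          gcongr
          exact norm_nonlinearity_sub_le hp hb hs
    _ = _ := by field_simp

theorem stmt5_general (p δ κ b a : ℝ) (hp : 1 < p)
    (hb : b = (p - 1) ^ 2 / (8 * Real.sqrt (p * (p + 1)))) :
    ∃ C : ℝ, 0 < C ∧ ∃ s₀ : ℝ, 1 ≤ s₀ ∧ ∀ s : ℝ, s₀ ≤ s → ∀ y : ℝ,
      ‖Rt p δ κ b a y s‖ ≤ C / Real.sqrt s := by
  obtain ⟨C, hC⟩ := exists_norm_Rt_le p δ κ b a hp (by rw [hb]; positivity)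
  refine ⟨max C 1, by positivity, 1, le_rfl, fun s hs y => (hC s hs y).trans ?_⟩
  gcongr
  exact le_max_left C 1

/-- there exist `C > 0` and `s₀ ≥ 1` such that `|R(y,s)| ≤ C/√s`
for all `s ≥ s₀` and `y ∈ ℝ`. -/
theorem stmt5 (p δ κ b a : ℝ) (hp : 1 < p) (hδ : δ = Real.sqrt p)
    (hκ : κ = (p - 1) ^ (-(1 : ℝ) / (p - 1)))
    (hb : b = (p - 1) ^ 2 / (8 * Real.sqrt (p * (p + 1))))
    (ha : a = κ / (4 * Real.sqrt (p * (p + 1)))) :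
    ∃ C : ℝ, 0 < C ∧ ∃ s₀ : ℝ, 1 ≤ s₀ ∧ ∀ s : ℝ, s₀ ≤ s → ∀ y : ℝ,
      ‖Rt p δ κ b a y s‖ ≤ C / Real.sqrt s :=
  stmt5_general p δ κ b a hp hb
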